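/- arXiv:1802.01138 — 2 statements merged into one kernel-verified Lean document; each statement's English description precedes it below -/
import Mathlib

section
/- Correctness of Paillier decryption with g = 1+N: let N = PQ (P ≠ Q odd primes, gcd(N, λ) = 1, λ = lcm(P−1,Q−1)), let L(u) = (u−1)/N for u ≡ 1 (mod N), and μ = (L((1+N)^λ mod N²))⁻¹ mod N. Then for every m ∈ Z_N and r ∈ (Z/N)^×, with c = (1+N)^m r^N mod N², one has L(c^λ mod N²) · μ ≡ m (mod N). -/
/-!
Since `N * N = 0` in `ZMod (N ^ 2)`, the binomial theorem collapses to `(1 + N) ^ k = 1 + k * N`,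
so `L` recovers `k mod N` from `(1 + N) ^ k`. The Carmichael exponent of `(P * Q) ^ 2` divides
`lcm (φ (P ^ 2)) (φ (Q ^ 2)) = lcm (P * (P - 1)) (Q * (Q - 1))`, which divides `N * λ`; hence
the random factor `r ^ N` is killed by raising to the power `λ`, leaving `c ^ λ = (1 + N) ^ (m * λ)`, and multiplying
`L (c ^ λ) = m * λ mod N` by `μ = λ⁻¹ mod N` gives `m`.
-/

open ArithmeticFunction

lemma one_add_pow_of_mul_self_eq_zero {R : Type*} [CommSemiring R] {x : R} (hx : x * x = 0)
    (k : ℕ) : (1 + x) ^ k = 1 + k * x := by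
  induction k with
  | zero => simp
  | succ k ih =>
    rw [pow_succ, ih]
    calc (1 + k * x) * (1 + x) = 1 + (k + 1) * x + k * (x * x) := by ring
      _ = 1 + ((k + 1 : ℕ) : R) * x := by rw [hx, mul_zero, add_zero, Nat.cast_succ]

namespace ZMod

lemma natCast_mul_self_eq_zero (N : ℕ) : (N : ZMod (N ^ 2)) * N = 0 := by
  rw [← Nat.cast_mul, ← sq, natCast_self]

lemma val_one_add_mul_natCast {N : ℕ} (hN : 1 < N) (k : ℕ) :
    (1 + (k : ZMod (N ^ 2)) * N).val = 1 + k % N * N := by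
  have hmod : k % N * N ≡ k * N [MOD N ^ 2] := by
    simpa only [sq] using (Nat.mod_modEq k N).mul_right' N
  have hlt : 1 + k % N * N < N ^ 2 := by
    have := Nat.mod_lt k (by omega : 0 < N)
    nlinarith
  have hcast : ((k % N : ℕ) : ZMod (N ^ 2)) * N = k * N := by
    exact_mod_cast (natCast_eq_natCast_iff _ _ _).mpr hmod
  rw [← val_natCast_of_lt hlt]
  push_cast
  rw [hcast]

lemma val_one_add_natCast_pow_sub_one_div {N : ℕ} (hN : 1 < N) (k : ℕ) :
    (((1 + (N : ZMod (N ^ 2))) ^ k).val - 1) / N = k % N := by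
  rw [one_add_pow_of_mul_self_eq_zero (natCast_mul_self_eq_zero N),
    val_one_add_mul_natCast hN, Nat.add_sub_cancel_left, Nat.mul_div_cancel _ (by omega)]

lemma natCast_pow_eq_one_of_carmichael_dvd {n r e : ℕ} (hr : r.Coprime n)
    (he : carmichael n ∣ e) : (r : ZMod n) ^ e = 1 := by
  obtain ⟨k, rfl⟩ := he
  rw [← coe_unitOfCoprime r hr, ← Units.val_pow_eq_pow_val, pow_mul, pow_carmichael, one_pow,
    Units.val_one]

end ZMod

lemma carmichael_sq_dvd_mul_lcm {P Q : ℕ} (hP : P.Prime) (hQ : Q.Prime) (hne : P ≠ Q) :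
    carmichael ((P * Q) ^ 2) ∣ P * Q * Nat.lcm (P - 1) (Q - 1) := by
  have hcop : (P ^ 2).Coprime (Q ^ 2) := ((Nat.coprime_primes hP hQ).mpr hne).pow 2 2
  have htot {p : ℕ} (hp : p.Prime) : (p ^ 2).totient = p * (p - 1) := by
    rw [Nat.totient_prime_pow_succ hp, pow_one]
  rw [mul_pow, carmichael_mul hcop]
  refine Nat.lcm_dvd ((carmichael_dvd_totient _).trans ?_) ((carmichael_dvd_totient _).trans ?_)
  · rw [htot hP]
    exact mul_dvd_mul (dvd_mul_right P Q) (Nat.dvd_lcm_left _ _)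
  · rw [htot hQ]
    exact mul_dvd_mul (dvd_mul_left Q P) (Nat.dvd_lcm_right _ _)

theorem paillier_decryption_correct_general (P Q : ℕ) (hP : P.Prime) (hQ : Q.Prime)
    (hne : P ≠ Q)
    (N : ℕ) (hN : N = P * Q)
    (lam : ℕ) (hlam : lam = Nat.lcm (P - 1) (Q - 1))
    (L : ℕ → ℕ) (hL : ∀ u, L u = (u - 1) / N)
    (mu : ℕ) (hmu : (L (((1 + (N : ZMod (N ^ 2))) ^ lam).val) * mu) % N = 1 % N)
    (m r : ℕ) (hm : m < N) (hr : r.Coprime N)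
    (c : ZMod (N ^ 2))
    (hc : c = (1 + (N : ZMod (N ^ 2))) ^ m * (r : ZMod (N ^ 2)) ^ N) :
    (L ((c ^ lam).val) * mu) % N = m := by
  have hN1 : 1 < N := hN ▸ Nat.one_lt_mul_iff.mpr ⟨hP.pos, hQ.pos, Or.inl hP.one_lt⟩
  have hr_pow : (r : ZMod (N ^ 2)) ^ (N * lam) = 1 :=
    ZMod.natCast_pow_eq_one_of_carmichael_dvd (hr.pow_right 2)
      (hN ▸ hlam ▸ carmichael_sq_dvd_mul_lcm hP hQ hne)
  have hc_pow : c ^ lam = (1 + (N : ZMod (N ^ 2))) ^ (m * lam) := by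
    rw [hc, mul_pow, ← pow_mul, ← pow_mul, hr_pow, mul_one]
  simp only [hc_pow, hL, ZMod.val_one_add_natCast_pow_sub_one_div hN1] at hmu ⊢
  have hlam_mu : lam * mu ≡ 1 [MOD N] := by rwa [Nat.ModEq, ← Nat.mod_mul_mod]
  calc m * lam % N * mu % N = m * (lam * mu) % N := by rw [Nat.mod_mul_mod, mul_assoc]
    _ = m * 1 % N := hlam_mu.mul_left m
    _ = m := by rw [mul_one, Nat.mod_eq_of_lt hm]

/-- Correctness of Paillier decryption with `g = 1 + N`. -/
theorem paillier_decryption_correct (P Q : ℕ) (hP : P.Prime) (hQ : Q.Prime)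
    (hPodd : Odd P) (hQodd : Odd Q) (hne : P ≠ Q)
    (N : ℕ) (hN : N = P * Q)
    (lam : ℕ) (hlam : lam = Nat.lcm (P - 1) (Q - 1)) (hco : N.Coprime lam)
    (L : ℕ → ℕ) (hL : ∀ u, L u = (u - 1) / N)
    (mu : ℕ) (hmu : (L (((1 + (N : ZMod (N ^ 2))) ^ lam).val) * mu) % N = 1 % N)
    (m r : ℕ) (hm : m < N) (hr : r.Coprime N)
    (c : ZMod (N ^ 2))
    (hc : c = (1 + (N : ZMod (N ^ 2))) ^ m * (r : ZMod (N ^ 2)) ^ N) :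
    (L ((c ^ lam).val) * mu) % N = m :=
  paillier_decryption_correct_general P Q hP hQ hne N hN lam hlam L hL mu hmu m r hm hr c hc
end

section
/- In mOPE₂ with order range {0,…,M}: if M ≥ 2^h − 1 and at most 2^h − 1 values are inserted in any order without triggering more than the allowed recursion depth (i.e., every insertion finds y_r − y_l ≥ 2), then all assigned orders are distinct and the map from inserted plaintexts to orders is strictly increasing on distinct plaintexts (for a deterministic scheme: x < x' implies y(x) < y(x'), and x = x' implies y(x) = y(x')). -/
/-! If `x̄ = xᵢ` the new entry repeats `⟨xᵢ, yᵢ⟩`. Otherwise a gap of at least 2 puts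
`yᵢ + ⌈(yᵢ₊₁ − yᵢ)/2⌉` strictly inside `(yᵢ, yᵢ₊₁)`, and since no stored plaintext lies strictly
between `xᵢ` and `xᵢ₊₁`, every stored entry is strictly below or strictly above the new one in
both coordinates. -/

def Mono (s : List (ℤ × ℤ)) : Prop :=
  ∀ p ∈ s, ∀ q ∈ s, (p.1 < q.1 → p.2 < q.2) ∧ (p.1 = q.1 → p.2 = q.2)

open Set

theorem add_ceil_half_sub_mem_Ioo {K : Type*} [Field K] [LinearOrder K] [IsStrictOrderedRing K]
    [FloorRing K] {a b : ℤ} (h : 2 ≤ b - a) : a + ⌈((b - a : K)) / 2⌉ ∈ Ioo a b := by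
  have hK : (2 : K) ≤ b - a := by exact_mod_cast h
  have hpos : 0 < ⌈((b - a : K)) / 2⌉ := Int.ceil_pos.mpr (by linarith)
  have hle : ⌈((b - a : K)) / 2⌉ ≤ b - a - 1 := Int.ceil_le.mpr (by push_cast; linarith)
  constructor <;> omega

namespace Mono

variable {s : List (ℤ × ℤ)}

theorem snd_le_of_fst_le (hs : Mono s) {p q : ℤ × ℤ} (hp : p ∈ s) (hq : q ∈ s)
    (h : p.1 ≤ q.1) : p.2 ≤ q.2 := by
  rcases h.lt_or_eq with h | h
  · exact ((hs p hp q hq).1 h).le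
  · exact ((hs p hp q hq).2 h).le

theorem cons_of_mem (hs : Mono s) {a : ℤ × ℤ} (ha : a ∈ s) : Mono (a :: s) := by
  have hmem {p : ℤ × ℤ} (hp : p ∈ a :: s) : p ∈ s := (List.mem_cons.1 hp).elim (· ▸ ha) id
  exact fun p hp q hq => hs p (hmem hp) q (hmem hq)

theorem cons_of_forall_lt_or_gt (hs : Mono s) {a : ℤ × ℤ}
    (ha : ∀ q ∈ s, (q.1 < a.1 ∧ q.2 < a.2) ∨ (a.1 < q.1 ∧ a.2 < q.2)) : Mono (a :: s) := by
  intro p hp q hq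
  rcases List.mem_cons.1 hp with rfl | hps <;> rcases List.mem_cons.1 hq with rfl | hqs
  · exact ⟨fun h => absurd h (lt_irrefl _), fun _ => rfl⟩
  · rcases ha q hqs with h | h <;> omega
  · rcases ha p hps with h | h <;> omega
  · exact hs p hps q hqs

theorem cons_of_mem_Ioo (hs : Mono s) {xl yl xr yr x y : ℤ} (hl : (xl, yl) ∈ s)
    (hr : (xr, yr) ∈ s) (hconsec : ∀ p ∈ s, p.1 ≤ xl ∨ xr ≤ p.1) (hx : x ∈ Ioo xl xr)
    (hy : y ∈ Ioo yl yr) : Mono ((x, y) :: s) := by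
  refine hs.cons_of_forall_lt_or_gt fun q hq => ?_
  rcases hconsec q hq with h | h
  · exact .inl ⟨h.trans_lt hx.1, (hs.snd_le_of_fst_le hq hl h).trans_lt hy.1⟩
  · exact .inr ⟨hx.2.trans_le h, hy.2.trans_le (hs.snd_le_of_fst_le hr hq h)⟩

end Mono

/-- mOPE₂ insertion preserves strict order preservation: inserting a new
plaintext `x̄` between consecutive state entries `⟨xᵢ, yᵢ⟩`, `⟨xᵢ₊₁, yᵢ₊₁⟩` with
`xᵢ ≤ x̄ < xᵢ₊₁`, where the assigned order is `yᵢ` if `x̄ = xᵢ` and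
`yᵢ + ⌈(yᵢ₊₁ − yᵢ)/2⌉` otherwise (the gap satisfying `yᵢ₊₁ − yᵢ ≥ 2`), keeps the
plaintext-to-order map injective on distinct plaintexts and strictly
increasing. -/
theorem mope2_insert_preserves_mono (s : List (ℤ × ℤ)) (hmono : Mono s)
    (xi yi xi1 yi1 : ℤ) (hin : (xi, yi) ∈ s) (hin1 : (xi1, yi1) ∈ s)
    (hconsec : ∀ p ∈ s, p.1 ≤ xi ∨ xi1 ≤ p.1)
    (xbar : ℤ) (hx1 : xi ≤ xbar) (hx2 : xbar < xi1)
    (hgap : xbar ≠ xi → yi1 - yi ≥ 2)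
    (ybar : ℤ)
    (hybar : ybar = if xbar = xi then yi else yi + ⌈((yi1 - yi : ℚ)) / 2⌉) :
    Mono ((xbar, ybar) :: s) := by
  by_cases hxe : xbar = xi
  · rw [if_pos hxe] at hybar
    subst hxe hybar
    exact hmono.cons_of_mem hin
  · rw [if_neg hxe] at hybar
    have hy : ybar ∈ Ioo yi yi1 := hybar ▸ add_ceil_half_sub_mem_Ioo (hgap hxe)
    exact hmono.cons_of_mem_Ioo hin hin1 hconsec ⟨hx1.lt_of_ne (Ne.symm hxe), hx2⟩ hy
end
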